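/- Let V be a (d−1)-dimensional subspace of ℝ^d with unit normal vector w, let Q ⊆ V, and let α, β, β' be reals with α > β and α > β'. Then H(w, β) ∩ Cone(Q + β'w, αw) = ((α−β)/(α−β'))Q + βw. -/
import Mathlib


open RealInnerProductSpace

/-- The cone through `Q` with apex `x`: all points `t•q + (1−t)•x` with `q ∈ Q`, `t ≥ 0`. -/
def Cone {d : ℕ} (Q : Set (EuclideanSpace ℝ (Fin d))) (x : EuclideanSpace ℝ (Fin d)) :
    Set (EuclideanSpace ℝ (Fin d)) :=
  {v | ∃ q ∈ Q, ∃ t : ℝ, 0 ≤ t ∧ v = t • q + (1 - t) • x}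

/-- The hyperplane perpendicular to `w` at parameter `β`. -/
def Hyp {d : ℕ} (w : EuclideanSpace ℝ (Fin d)) (β : ℝ) : Set (EuclideanSpace ℝ (Fin d)) :=
  {v | ⟪v, w⟫ = β}

/-- Let `V` be a `(d−1)`-dimensional subspace of `ℝ^d` with unit normal `w`, `Q ⊆ V`, and
`α > β`, `α > β'`.  Then `H(w, β) ∩ Cone(Q + β'w, αw) = ((α−β)/(α−β'))Q + βw`. -/
theorem hyperplane_cone_intersection (d : ℕ) (V : Submodule ℝ (EuclideanSpace ℝ (Fin d)))
    (hV : Module.finrank ℝ V = d - 1)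
    (w : EuclideanSpace ℝ (Fin d)) (hw : ‖w‖ = 1) (hperp : ∀ v ∈ V, ⟪v, w⟫ = (0 : ℝ))
    (Q : Set (EuclideanSpace ℝ (Fin d))) (hQ : Q ⊆ (V : Set (EuclideanSpace ℝ (Fin d))))
    (α β β' : ℝ) (hβ : β < α) (hβ' : β' < α) :
    Hyp w β ∩ Cone ((fun q => q + β' • w) '' Q) (α • w)
      = (fun q => ((α - β) / (α - β')) • q + β • w) '' Q := by
  have hww : ⟪w, w⟫ = (1 : ℝ) := by
    rw [real_inner_self_eq_norm_sq, hw]; norm_num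
  have hαβ' : α - β' ≠ 0 := by linarith
  ext v
  constructor
  · rintro ⟨hv, q, ⟨q0, hq0, rfl⟩, t, ht, rfl⟩
    have hq0w : ⟪q0, w⟫ = (0 : ℝ) := hperp q0 (hQ hq0)
    have hinner : ⟪t • (q0 + β' • w) + (1 - t) • (α • w), w⟫ = t * β' + (1 - t) * α := by
      simp only [inner_add_left, real_inner_smul_left, hq0w, hww]
      ring
    have hvβ : t * β' + (1 - t) * α = β := by
      rw [← hinner]; exact hv
    have ht' : t = (α - β) / (α - β') := by
      field_simp; linarith
    refine ⟨q0, hq0, ?_⟩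
    rw [← ht']
    have : (t • (q0 + β' • w) + (1 - t) • (α • w) : EuclideanSpace ℝ (Fin d))
        = t • q0 + (t * β' + (1 - t) * α) • w := by
      rw [smul_add, smul_smul, smul_smul, add_smul, add_assoc]
    rw [hvβ] at this
    exact this.symm
  · rintro ⟨q0, hq0, rfl⟩
    have hq0w : ⟪q0, w⟫ = (0 : ℝ) := hperp q0 (hQ hq0)
    set t := (α - β) / (α - β') with htdef
    have ht : 0 ≤ t := by
      apply div_nonneg <;> linarith
    constructor
    · show ⟪t • q0 + β • w, w⟫ = β
      simp only [inner_add_left, real_inner_smul_left, hq0w, hww]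
      ring
    · refine ⟨q0 + β' • w, ⟨q0, hq0, rfl⟩, t, ht, ?_⟩
      have hb : t * β' + (1 - t) * α = β := by
        rw [htdef]
        field_simp
        ring
      calc t • q0 + β • w = t • q0 + (t * β' + (1 - t) * α) • w := by rw [hb]
        _ = t • (q0 + β' • w) + (1 - t) • (α • w) := by
            rw [smul_add, smul_smul, smul_smul, add_smul, add_assoc]
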